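/- For density matrices ρ, σ on a finite-dimensional Hilbert space, the trace distance δ(ρ,σ) = max over 0 ≤ Υ ≤ 1 of Tr[Υ(ρ−σ)] and the fidelity F(ρ,σ) = ‖√ρ√σ‖₁ satisfy δ(ρ,σ)² + F(ρ,σ)² ≤ 1. -/

import Mathlib

open Matrix Kronecker Complex BigOperators
open scoped ComplexOrder Classical

noncomputable section

/-- primitive d-th root of unity -/
def omg (d : ℕ) : ℂ := Complex.exp (2 * Real.pi * Complex.I / d)

/-- standard basis vector |z⟩ -/
def ketZ (d : ℕ) (z : Fin d) : Fin d → ℂ := fun i => if i = z then 1 else 0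

/-- Fourier basis vector |x̃⟩ = (1/√d) Σ_z ω^{xz} |z⟩ -/
def ketX (d : ℕ) (x : Fin d) : Fin d → ℂ :=
  fun z => ((1 / Real.sqrt d : ℝ) : ℂ) * omg d ^ ((x : ℕ) * (z : ℕ))

/-- projector |z⟩⟨z| -/
def projZ (d : ℕ) (z : Fin d) : Matrix (Fin d) (Fin d) ℂ :=
  Matrix.vecMulVec (ketZ d z) (star (ketZ d z))

/-- projector |x̃⟩⟨x̃| -/
def projX (d : ℕ) (x : Fin d) : Matrix (Fin d) (Fin d) ℂ :=
  Matrix.vecMulVec (ketX d x) (star (ketX d x))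

/-- positive semidefinite square root (0 if not PSD) -/
def msqrt {n : Type*} [Fintype n] [DecidableEq n] (M : Matrix n n ℂ) : Matrix n n ℂ :=
  if h : M.PosSemidef then
    (h.1.eigenvectorUnitary : Matrix n n ℂ) *
      Matrix.diagonal (fun i => ((Real.sqrt (h.1.eigenvalues i) : ℝ) : ℂ)) *
      (star h.1.eigenvectorUnitary : Matrix n n ℂ)
  else 0

/-- trace norm ‖M‖₁ = Tr √(MᴴM) -/
def trNorm {n : Type*} [Fintype n] [DecidableEq n] (M : Matrix n n ℂ) : ℝ :=
  (msqrt (Mᴴ * M)).trace.re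

/-- fidelity F(ρ,σ) = ‖√ρ√σ‖₁ -/
def Fid {n : Type*} [Fintype n] [DecidableEq n] (ρ σ : Matrix n n ℂ) : ℝ :=
  trNorm (msqrt ρ * msqrt σ)

/-- a POVM with d outcomes -/
def IsPOVM {n : Type*} [Fintype n] [DecidableEq n] {d : ℕ} (Λ : Fin d → Matrix n n ℂ) : Prop :=
  (∀ z, (Λ z).PosSemidef) ∧ ∑ z, Λ z = 1

/-- optimal guessing probability of the measurement with rank-one elements P z on A,
given the B part of the bipartite state ψ -/
def Pguess {d : ℕ} {β : Type*} [Fintype β] [DecidableEq β]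
    (P : Fin d → Matrix (Fin d) (Fin d) ℂ) (ψ : Matrix (Fin d × β) (Fin d × β) ℂ) : ℝ :=
  sSup { r | ∃ Λ : Fin d → Matrix β β ℂ, IsPOVM Λ ∧
    r = (Matrix.trace ((∑ z, P z ⊗ₖ Λ z) * ψ)).re }

/-- trace distance δ(ρ,σ) = max_{0 ≤ Υ ≤ 1} Tr[Υ(ρ-σ)] -/
def traceDist {n : Type*} [Fintype n] [DecidableEq n] (ρ σ : Matrix n n ℂ) : ℝ :=
  sSup { r | ∃ Υ : Matrix n n ℂ, Υ.PosSemidef ∧ ((1 : Matrix n n ℂ) - Υ).PosSemidef ∧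
    r = ((Υ * (ρ - σ)).trace).re }

/-!
For an effect `0 ≤ Υ ≤ 1`, the two-outcome measurement `{Υ, 1 - Υ}` turns `ρ` and `σ` into coin
flips with biases `t = Tr Υρ` and `s = Tr Υσ`. The fidelity can only grow under measurement,
`F(ρ,σ) ≤ √(ts) + √((1-t)(1-s))`: writing `‖√ρ√σ‖₁ = Tr (Cᴴ √ρ √σ)` for a contraction `C` (polar
decomposition) and inserting `1 = Σ Λ_z` between `√ρ` and `√σ`, each term is bounded by the
Cauchy–Schwarz inequality for the trace inner product. For two coins `(t - s)² + F² ≤ 1` is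
elementary, and taking the supremum over `Υ` gives the claim.
-/

namespace Matrix.IsHermitian

variable {𝕜 n : Type*} [RCLike 𝕜] [Fintype n] [DecidableEq n] {A : Matrix n n 𝕜}
  (hA : A.IsHermitian)

lemma cfc_congr {f g : ℝ → ℝ} (h : ∀ i, f (hA.eigenvalues i) = g (hA.eigenvalues i)) :
    hA.cfc f = hA.cfc g := by
  rw [IsHermitian.cfc, IsHermitian.cfc]
  congr 2
  funext i
  simp [h i]

lemma cfc_id : hA.cfc id = A :=
  hA.spectral_theorem.symm

lemma cfc_mul (f g : ℝ → ℝ) : hA.cfc f * hA.cfc g = hA.cfc fun x => f x * g x := by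
  simp only [IsHermitian.cfc, ← map_mul, diagonal_mul_diagonal]
  congr 2
  funext i
  simp

lemma one_sub_cfc (f : ℝ → ℝ) : 1 - hA.cfc f = hA.cfc fun x => 1 - f x := by
  rw [IsHermitian.cfc, ← map_one (Unitary.conjStarAlgAut 𝕜 _ hA.eigenvectorUnitary), ← map_sub,
    ← diagonal_one, diagonal_sub]
  congr 2
  funext i
  simp

lemma conjTranspose_cfc (f : ℝ → ℝ) : (hA.cfc f)ᴴ = hA.cfc f := by
  rw [IsHermitian.cfc, ← star_eq_conjTranspose, ← map_star, star_eq_conjTranspose,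
    diagonal_conjTranspose]
  congr 2
  funext i
  simp

lemma posSemidef_cfc {f : ℝ → ℝ} (hf : ∀ i, 0 ≤ f (hA.eigenvalues i)) :
    (hA.cfc f).PosSemidef := by
  rw [IsHermitian.cfc, Unitary.conjStarAlgAut_apply, star_eq_conjTranspose]
  refine (PosSemidef.diagonal fun i => ?_).mul_mul_conjTranspose_same _
  simpa using hf i

end Matrix.IsHermitian

section

variable {n : Type*} [Fintype n] [DecidableEq n]

lemma msqrt_eq_cfc {M : Matrix n n ℂ} (hM : M.PosSemidef) : msqrt M = hM.1.cfc Real.sqrt := by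
  rw [msqrt, dif_pos hM]
  rfl

lemma posSemidef_msqrt {M : Matrix n n ℂ} (hM : M.PosSemidef) : (msqrt M).PosSemidef := by
  rw [msqrt_eq_cfc hM]
  exact hM.1.posSemidef_cfc fun _ => Real.sqrt_nonneg _

lemma msqrt_mul_self {M : Matrix n n ℂ} (hM : M.PosSemidef) : msqrt M * msqrt M = M := by
  rw [msqrt_eq_cfc hM, IsHermitian.cfc_mul]
  exact (hM.1.cfc_congr fun i => Real.mul_self_sqrt (hM.eigenvalues_nonneg i)).trans hM.1.cfc_id

lemma trace_msqrt_mul_mul_msqrt {P : Matrix n n ℂ} (hP : P.PosSemidef) (M : Matrix n n ℂ) :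
    (msqrt P * M * msqrt P).trace = (P * M).trace := by
  rw [trace_mul_cycle, msqrt_mul_self hP]

lemma trNorm_nonneg (A : Matrix n n ℂ) : 0 ≤ trNorm A :=
  (RCLike.nonneg_iff.mp (posSemidef_msqrt (posSemidef_conjTranspose_mul_self A)).trace_nonneg).1

lemma re_trace_mul_nonneg {A B : Matrix n n ℂ} (hA : A.PosSemidef) (hB : B.PosSemidef) :
    0 ≤ (A * B).trace.re := by
  rw [← msqrt_mul_self hB, ← mul_assoc, trace_mul_cycle]
  have h := hA.conjTranspose_mul_mul_same (msqrt B)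
  rw [(posSemidef_msqrt hB).1.eq] at h
  exact (RCLike.nonneg_iff.mp h.trace_nonneg).1

lemma re_trace_one_sub_mul (Υ : Matrix n n ℂ) {ρ : Matrix n n ℂ} (hρ : ρ.trace = 1) :
    ((1 - Υ) * ρ).trace.re = 1 - (Υ * ρ).trace.re := by
  rw [Matrix.sub_mul, Matrix.one_mul, trace_sub, hρ, Complex.sub_re, Complex.one_re]

lemma exists_contraction_trace_eq_msqrt (A : Matrix n n ℂ) :
    ∃ C : Matrix n n ℂ, (1 - Cᴴ * C).PosSemidef ∧ (Cᴴ * A).trace = (msqrt (Aᴴ * A)).trace := by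
  have hH := posSemidef_conjTranspose_mul_self A
  -- `C = A |A|⁻¹`, where `(√0)⁻¹ = 0` makes `|A|⁻¹` the pseudo-inverse on the kernel of `A`
  set B := hH.1.cfc fun x => (√x)⁻¹
  refine ⟨A * B, ?_, ?_⟩
  · have hCC : (A * B)ᴴ * (A * B) = hH.1.cfc fun x => (√x)⁻¹ * x * (√x)⁻¹ := calc
      _ = B * hH.1.cfc id * B := by
        rw [hH.1.cfc_id, conjTranspose_mul, hH.1.conjTranspose_cfc]
        simp only [mul_assoc]
        rfl
      _ = _ := by rw [IsHermitian.cfc_mul, IsHermitian.cfc_mul]; rfl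
    rw [hCC, IsHermitian.one_sub_cfc]
    refine hH.1.posSemidef_cfc fun i => ?_
    rw [inv_mul_eq_div, Real.div_sqrt]
    exact sub_nonneg.mpr mul_inv_le_one
  · calc ((A * B)ᴴ * A).trace = (B * hH.1.cfc id).trace := by
          rw [hH.1.cfc_id, conjTranspose_mul, hH.1.conjTranspose_cfc, mul_assoc]
      _ = (msqrt (Aᴴ * A)).trace := by
        rw [IsHermitian.cfc_mul, msqrt_eq_cfc hH]
        congr 1
        exact hH.1.cfc_congr fun _ => by rw [id, inv_mul_eq_div, Real.div_sqrt]

lemma re_trace_conjTranspose_mul_le (X Y : Matrix n n ℂ) :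
    (Xᴴ * Y).trace.re ≤ √(Xᴴ * X).trace.re * √(Yᴴ * Y).trace.re := by
  let _ := toMatrixSeminormedAddCommGroup (1 : Matrix n n ℂ) PosSemidef.one
  let _ := toMatrixInnerProductSpace (1 : Matrix n n ℂ) PosSemidef.one
  have h := re_inner_le_norm (𝕜 := ℂ) X Y
  rw [norm_eq_sqrt_re_inner (𝕜 := ℂ), norm_eq_sqrt_re_inner (𝕜 := ℂ)] at h
  change (Y * 1 * Xᴴ).trace.re ≤ √(X * 1 * Xᴴ).trace.re * √(Y * 1 * Yᴴ).trace.re at h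
  simpa only [Matrix.mul_one, trace_mul_comm Y, trace_mul_comm X] using h

lemma re_trace_conjTranspose_mul_self_le_of_contraction {m : Type*} [Fintype m]
    {C : Matrix n n ℂ} (hC : (1 - Cᴴ * C).PosSemidef) (X : Matrix n m ℂ) :
    ((C * X)ᴴ * (C * X)).trace.re ≤ (Xᴴ * X).trace.re := by
  have h := (RCLike.nonneg_iff.mp (hC.conjTranspose_mul_mul_same X).trace_nonneg).1
  rw [Matrix.mul_sub, Matrix.mul_one, Matrix.sub_mul, trace_sub, map_sub, sub_nonneg] at h
  simpa only [conjTranspose_mul, Matrix.mul_assoc, RCLike.re_to_complex] using h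

lemma re_trace_mul_mul_le_of_contraction {C : Matrix n n ℂ} (hC : (1 - Cᴴ * C).PosSemidef)
    (X Y : Matrix n n ℂ) :
    (Cᴴ * X * Y).trace.re ≤ √(Xᴴ * X).trace.re * √(Y * Yᴴ).trace.re := calc
  (Cᴴ * X * Y).trace.re = ((C * Yᴴ)ᴴ * X).trace.re := by
    rw [trace_mul_comm, conjTranspose_mul, conjTranspose_conjTranspose, mul_assoc]
  _ ≤ √((C * Yᴴ)ᴴ * (C * Yᴴ)).trace.re * √(Xᴴ * X).trace.re :=
    re_trace_conjTranspose_mul_le _ _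
  _ ≤ √(Y * Yᴴ).trace.re * √(Xᴴ * X).trace.re := by
    refine mul_le_mul_of_nonneg_right (Real.sqrt_le_sqrt ?_) (Real.sqrt_nonneg _)
    simpa only [conjTranspose_conjTranspose] using
      re_trace_conjTranspose_mul_self_le_of_contraction hC Yᴴ
  _ = _ := mul_comm _ _

theorem fid_le_sum_sqrt_mul_sqrt {d : ℕ} {ρ σ : Matrix n n ℂ} {Λ : Fin d → Matrix n n ℂ}
    (hρ : ρ.PosSemidef) (hσ : σ.PosSemidef) (hΛ : IsPOVM Λ) :
    Fid ρ σ ≤ ∑ z, √(Λ z * ρ).trace.re * √(Λ z * σ).trace.re := by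
  obtain ⟨C, hC, htr⟩ := exists_contraction_trace_eq_msqrt (msqrt ρ * msqrt σ)
  have hsplit : Fid ρ σ =
      ∑ z, (Cᴴ * (msqrt ρ * msqrt (Λ z)) * (msqrt (Λ z) * msqrt σ)).trace.re := by
    simp only [mul_assoc, ← mul_assoc (msqrt (Λ _)), msqrt_mul_self (hΛ.1 _)]
    rw [Fid, trNorm, ← htr, ← Complex.re_sum, ← trace_sum, ← Finset.mul_sum, ← Finset.mul_sum,
      ← Finset.sum_mul, hΛ.2, one_mul]
  rw [hsplit]
  gcongr with z
  refine (re_trace_mul_mul_le_of_contraction hC _ _).trans_eq ?_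
  rw [conjTranspose_mul, conjTranspose_mul, (posSemidef_msqrt hρ).1.eq,
    (posSemidef_msqrt hσ).1.eq, (posSemidef_msqrt (hΛ.1 z)).1.eq]
  simp only [mul_assoc]
  rw [← mul_assoc (msqrt ρ), msqrt_mul_self hρ, ← mul_assoc (msqrt σ), msqrt_mul_self hσ,
    ← mul_assoc, ← mul_assoc, trace_msqrt_mul_mul_msqrt (hΛ.1 z),
    trace_msqrt_mul_mul_msqrt (hΛ.1 z)]

/-- With `a, b, c, d = √t, √(1-t), √s, √(1-s)`: Lagrange's identity gives
`(ac + bd)² + (ad - bc)² = 1`, while `t - s = (ad - bc)(ad + bc)` and `(ad + bc)² ≤ 1`. -/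
lemma sq_sub_add_sq_le_one {t s : ℝ} (ht₀ : 0 ≤ t) (ht₁ : t ≤ 1) (hs₀ : 0 ≤ s) (hs₁ : s ≤ 1) :
    (t - s) ^ 2 + (√t * √s + √(1 - t) * √(1 - s)) ^ 2 ≤ 1 := by
  have ha := Real.sq_sqrt ht₀
  have hb := Real.sq_sqrt (sub_nonneg.2 ht₁)
  have hc := Real.sq_sqrt hs₀
  have hd := Real.sq_sqrt (sub_nonneg.2 hs₁)
  set a := √t
  set b := √(1 - t)
  set c := √s
  set d := √(1 - s)
  have hlagrange : (a * c + b * d) ^ 2 + (a * d - b * c) ^ 2 = 1 := by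
    linear_combination (c ^ 2 + d ^ 2) * (ha + hb) + hc + hd
  have hlagrange' : (a * d + b * c) ^ 2 + (a * c - b * d) ^ 2 = 1 := by
    linear_combination (c ^ 2 + d ^ 2) * (ha + hb) + hc + hd
  have hdiff : t - s = (a * d - b * c) * (a * d + b * c) := by
    linear_combination (-d ^ 2) * ha - t * hd + c ^ 2 * hb + (1 - t) * hc
  calc (t - s) ^ 2 + (a * c + b * d) ^ 2
      = (a * d - b * c) ^ 2 * (a * d + b * c) ^ 2 + (a * c + b * d) ^ 2 := by rw [hdiff]; ring
    _ ≤ (a * d - b * c) ^ 2 * 1 + (a * c + b * d) ^ 2 := by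
      gcongr
      linarith [sq_nonneg (a * c - b * d)]
    _ = 1 := by linarith

lemma sq_re_trace_mul_sub_add_fid_sq_le_one {ρ σ Υ : Matrix n n ℂ} (hρ : ρ.PosSemidef)
    (hρ1 : ρ.trace = 1) (hσ : σ.PosSemidef) (hσ1 : σ.trace = 1) (hΥ : Υ.PosSemidef)
    (hΥ1 : (1 - Υ).PosSemidef) :
    (Υ * (ρ - σ)).trace.re ^ 2 + Fid ρ σ ^ 2 ≤ 1 := by
  have hF := fid_le_sum_sqrt_mul_sqrt hρ hσ (Λ := ![Υ, 1 - Υ])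
    ⟨Fin.forall_fin_two.2 ⟨hΥ, hΥ1⟩, by simp [Fin.sum_univ_two]⟩
  simp only [Fin.sum_univ_two, Matrix.cons_val_zero, Matrix.cons_val_one,
    re_trace_one_sub_mul Υ hρ1, re_trace_one_sub_mul Υ hσ1] at hF
  have hρ' := re_trace_mul_nonneg hΥ1 hρ
  have hσ' := re_trace_mul_nonneg hΥ1 hσ
  rw [re_trace_one_sub_mul Υ hρ1] at hρ'
  rw [re_trace_one_sub_mul Υ hσ1] at hσ'
  rw [Matrix.mul_sub, trace_sub, Complex.sub_re]
  calc _ ≤ _ := by gcongr; exact trNorm_nonneg _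
    _ ≤ 1 := sq_sub_add_sq_le_one (re_trace_mul_nonneg hΥ hρ) (by linarith)
        (re_trace_mul_nonneg hΥ hσ) (by linarith)

lemma traceDist_sq_le {ρ σ : Matrix n n ℂ} {c : ℝ}
    (h : ∀ Υ : Matrix n n ℂ, Υ.PosSemidef → (1 - Υ).PosSemidef →
      (Υ * (ρ - σ)).trace.re ^ 2 ≤ c) :
    traceDist ρ σ ^ 2 ≤ c := by
  have hc := h 0 .zero (by simpa using PosSemidef.one)
  rw [zero_mul, trace_zero, Complex.zero_re, sq, zero_mul] at hc
  have hle : ∀ r ∈ {r | ∃ Υ : Matrix n n ℂ, Υ.PosSemidef ∧ (1 - Υ).PosSemidef ∧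
      r = (Υ * (ρ - σ)).trace.re}, r ≤ √c := by
    rintro _ ⟨Υ, hΥ, hΥ1, rfl⟩
    exact (le_abs_self _).trans (Real.abs_le_sqrt (h Υ hΥ hΥ1))
  have hmem : (0 : ℝ) ∈ {r | ∃ Υ : Matrix n n ℂ, Υ.PosSemidef ∧ (1 - Υ).PosSemidef ∧
      r = (Υ * (ρ - σ)).trace.re} := ⟨0, .zero, by simpa using PosSemidef.one, by simp⟩
  calc traceDist ρ σ ^ 2 ≤ √c ^ 2 :=
        pow_le_pow_left₀ (le_csSup ⟨√c, hle⟩ hmem) (csSup_le ⟨0, hmem⟩ hle) 2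
    _ = c := Real.sq_sqrt hc

end

/-- δ(ρ,σ)² + F(ρ,σ)² ≤ 1 for density matrices ρ, σ. -/
theorem traceDist_sq_add_fid_sq_le_one {n : Type*} [Fintype n] [DecidableEq n]
    {ρ σ : Matrix n n ℂ} (hρ : ρ.PosSemidef) (hρ1 : ρ.trace = 1)
    (hσ : σ.PosSemidef) (hσ1 : σ.trace = 1) :
    traceDist ρ σ ^ 2 + Fid ρ σ ^ 2 ≤ 1 := by
  have h := traceDist_sq_le fun Υ hΥ hΥ1 =>
    le_sub_iff_add_le.mpr (sq_re_trace_mul_sub_add_fid_sq_le_one hρ hρ1 hσ hσ1 hΥ hΥ1)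
  linarith
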